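/- arXiv:1510.06079 — 3 statements merged into one kernel-verified Lean document; each statement's English description precedes it below -/
import Mathlib

section
/- Let 0 < ε ≤ x₀ and let t : [−ε, ε] → ℝ be differentiable. Then for every x ∈ [−ε, ε], the derivative of the curve x ↦ W(x, t(x)) satisfies d/dx W(x, t(x)) = (1 − 2t(x)·φ''(x))·√(1 + φ'(x)²)·τ₂(x) + t'(x)·(1 + φ'(x)²)·τ₁(x). -/
/-- `τ₁(x) = (−2φ'(x), 1 − φ'(x)²)/(1 + φ'(x)²)`. -/
noncomputable def tau1 (φ' : ℝ → ℝ) (x : ℝ) : ℝ × ℝ :=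
  (1 / (1 + (φ' x) ^ 2)) • (-2 * φ' x, 1 - (φ' x) ^ 2)

/-- `τ₂(x) = (1, φ'(x))/√(1 + φ'(x)²)`. -/
noncomputable def tau2 (φ' : ℝ → ℝ) (x : ℝ) : ℝ × ℝ :=
  (1 / Real.sqrt (1 + (φ' x) ^ 2)) • (1, φ' x)

/-- `W(x,t) = (x, φ(x)) + t·(−2φ'(x), 1 − φ'(x)²)`. -/
noncomputable def Wmap (φ φ' : ℝ → ℝ) (x t : ℝ) : ℝ × ℝ :=
  (x, φ x) + t • (-2 * φ' x, 1 - (φ' x) ^ 2)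

/-! The direction `(−2φ', 1 − φ'²)` of the segments of `W` turns with velocity `−2φ''·(1, φ')`,
a multiple of the tangent `(1, φ')` of the graph; so along `x ↦ W(x, t(x))` the product rule
leaves only a tangential part `(1 − 2tφ'')·(1, φ')` and the term `t'·(−2φ', 1 − φ'²)`.
Rescaling `(1, φ')` and `(−2φ', 1 − φ'²)` to `τ₂` and `τ₁` gives the stated formula. -/

theorem sqrt_one_add_sq_smul_tau2 (φ' : ℝ → ℝ) (x : ℝ) :
    Real.sqrt (1 + φ' x ^ 2) • tau2 φ' x = (1, φ' x) := by
  have hsqrt : Real.sqrt (1 + φ' x ^ 2) ≠ 0 := (Real.sqrt_pos.2 (by positivity)).ne'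
  rw [tau2, smul_smul, mul_one_div_cancel hsqrt, one_smul]

theorem one_add_sq_smul_tau1 (φ' : ℝ → ℝ) (x : ℝ) :
    (1 + φ' x ^ 2) • tau1 φ' x = (-2 * φ' x, 1 - φ' x ^ 2) := by
  have hpos : (1 + φ' x ^ 2) ≠ 0 := by positivity
  rw [tau1, smul_smul, mul_one_div_cancel hpos, one_smul]

section

variable {φ φ' φ'' t : ℝ → ℝ} {x t' : ℝ}

theorem hasDerivAt_reflectionDirection (hφ' : HasDerivAt φ' (φ'' x) x) :
    HasDerivAt (fun s => (-2 * φ' s, 1 - φ' s ^ 2)) ((-2 * φ'' x) • (1, φ' x)) x := by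
  refine ((hφ'.const_mul (-2)).prodMk ((hφ'.pow 2).const_sub 1)).congr_deriv ?_
  ext <;> simp; ring

theorem hasDerivAt_Wmap_comp (hφ : HasDerivAt φ (φ' x) x) (hφ' : HasDerivAt φ' (φ'' x) x)
    (ht : HasDerivAt t t' x) :
    HasDerivAt (fun s => Wmap φ φ' s (t s))
      ((1 - 2 * t x * φ'' x) • (1, φ' x) + t' • (-2 * φ' x, 1 - φ' x ^ 2)) x := by
  refine (((hasDerivAt_id x).prodMk hφ).add
    (ht.smul (hasDerivAt_reflectionDirection hφ'))).congr_deriv ?_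
  module

end

theorem derivative_of_reflecting_curve_general (x₀ ε : ℝ)
    (hεx₀ : ε ≤ x₀) (φ φ' φ'' t t' : ℝ → ℝ)
    (hφ : ∀ x ∈ Set.Icc (-x₀) x₀, HasDerivAt φ (φ' x) x)
    (hφ' : ∀ x ∈ Set.Icc (-x₀) x₀, HasDerivAt φ' (φ'' x) x)
    (ht : ∀ x ∈ Set.Icc (-ε) ε, HasDerivAt t (t' x) x) :
    ∀ x ∈ Set.Icc (-ε) ε,
      HasDerivAt (fun s => Wmap φ φ' s (t s))
        (((1 - 2 * t x * φ'' x) * Real.sqrt (1 + (φ' x) ^ 2)) • tau2 φ' x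
          + (t' x * (1 + (φ' x) ^ 2)) • tau1 φ' x) x := by
  intro x hx
  have hx₀ : x ∈ Set.Icc (-x₀) x₀ := ⟨by linarith [hx.1], by linarith [hx.2]⟩
  rw [mul_smul, mul_smul, sqrt_one_add_sq_smul_tau2, one_add_sq_smul_tau1]
  exact hasDerivAt_Wmap_comp (hφ x hx₀) (hφ' x hx₀) (ht x hx)

/-- For a differentiable `t : [−ε, ε] → ℝ`,
`d/dx W(x, t(x)) = (1 − 2t(x)φ''(x))·√(1 + φ'(x)²)·τ₂(x) + t'(x)·(1 + φ'(x)²)·τ₁(x)`. -/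
theorem derivative_of_reflecting_curve (x₀ ε : ℝ) (hx₀ : 0 < x₀) (hε : 0 < ε)
    (hεx₀ : ε ≤ x₀) (φ φ' φ'' t t' : ℝ → ℝ)
    (hφ : ∀ x ∈ Set.Icc (-x₀) x₀, HasDerivAt φ (φ' x) x)
    (hφ' : ∀ x ∈ Set.Icc (-x₀) x₀, HasDerivAt φ' (φ'' x) x)
    (hφ''c : ContinuousOn φ'' (Set.Icc (-x₀) x₀))
    (ht : ∀ x ∈ Set.Icc (-ε) ε, HasDerivAt t (t' x) x) :
    ∀ x ∈ Set.Icc (-ε) ε,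
      HasDerivAt (fun s => Wmap φ φ' s (t s))
        (((1 - 2 * t x * φ'' x) * Real.sqrt (1 + (φ' x) ^ 2)) • tau2 φ' x
          + (t' x * (1 + (φ' x) ^ 2)) • tau1 φ' x) x :=
  derivative_of_reflecting_curve_general x₀ ε hεx₀ φ φ' φ'' t t' hφ hφ' ht
end

section
/- Let constants 0 < c₁ < c₀ < c and 0 < ε ≤ x₀ be such that for all x ∈ [−ε, ε]: (i) φ''(0)/(1 + c₁ε) < φ''(x) < φ''(0)·(1 + c₁ε); (ii) 0 < (1 + a(x))/(1 + b(x)) < 2; (iii) √(1 + φ'(x)²) < 2·√(1 + φ'(0)²); and (iv) 8·ε·φ''(0)·(2c + c²ε) < c₀ − c₁. Let l ∈ [c₀, c] and let t : [−ε, ε] → ℝ be a differentiable solution of t'(x) = ((1 + a(x))/(1 + b(x)))·(1 − 2φ''(x)·t(x))/√(1 + φ'(x)²) with initial condition t(−ε) = (1 + lε)/(2φ''(0)). Then 1 − 2φ''(x)·t(x) < 0 for all x ∈ [−ε, ε]. -/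
open Set

theorem exists_first_le_of_continuousOn {t : ℝ → ℝ} {p q B z : ℝ}
    (ht : ContinuousOn t (Icc p q)) (hz : z ∈ Icc p q) (htz : t z ≤ B) :
    ∃ m ∈ Icc p q, t m ≤ B ∧ ∀ x ∈ Ico p m, B < t x := by
  have hclosed : IsClosed (Icc p q ∩ t ⁻¹' Iic B) :=
    ht.preimage_isClosed_of_isClosed isClosed_Icc isClosed_Iic
  obtain ⟨m, ⟨hm, htm⟩, hleast⟩ :=
    (isCompact_Icc.of_isClosed_subset hclosed inter_subset_left).exists_isLeast ⟨z, hz, htz⟩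
  refine ⟨m, hm, htm, fun x hx => lt_of_not_ge fun htx => ?_⟩
  exact (hleast ⟨⟨hx.1, hx.2.le.trans hm.2⟩, htx⟩).not_gt hx.2

theorem lt_on_Icc_of_hasDerivAt {t t' : ℝ → ℝ} {p q B M : ℝ}
    (ht : ∀ x ∈ Icc p q, HasDerivAt t (t' x) x)
    (hdecr : ∀ x ∈ Icc p q, B < t x → t' x ≤ 0)
    (hslow : ∀ x ∈ Icc p q, B < t x → t x ≤ t p → -M ≤ t' x)
    (hM : 0 ≤ M) (hgap : B + M * (q - p) < t p) :
    ∀ x ∈ Icc p q, B < t x := by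
  have hcont : ContinuousOn t (Icc p q) := fun x hx => (ht x hx).continuousAt.continuousWithinAt
  by_contra! ⟨z, hz, htz⟩
  obtain ⟨m, hm, htm, habove⟩ := exists_first_le_of_continuousOn hcont hz htz
  have hsub : Icc p m ⊆ Icc p q := Icc_subset_Icc_right hm.2
  have hderiv : ∀ x ∈ interior (Icc p m), HasDerivAt t (t' x) x := fun x hx =>
    ht x (hsub (interior_subset hx))
  have habove' : ∀ x ∈ interior (Icc p m), B < t x := fun x hx =>
    habove x (Ioo_subset_Ico_self (by rwa [interior_Icc] at hx))
  have hdiff : DifferentiableOn ℝ t (interior (Icc p m)) := fun x hx =>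
    (hderiv x hx).differentiableAt.differentiableWithinAt
  have hanti : AntitoneOn t (Icc p m) :=
    antitoneOn_of_deriv_nonpos (convex_Icc p m) (hcont.mono hsub) hdiff fun x hx => by
      rw [(hderiv x hx).deriv]
      exact hdecr x (hsub (interior_subset hx)) (habove' x hx)
  have hdrop : -M * (m - p) ≤ t m - t p :=
    (convex_Icc p m).mul_sub_le_image_sub_of_le_deriv (hcont.mono hsub) hdiff
      (fun x hx => by
        have hx' := interior_subset hx
        rw [(hderiv x hx).deriv]
        exact hslow x (hsub hx') (habove' x hx) (hanti (left_mem_Icc.2 hm.1) hx' hx'.1))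
      p (left_mem_Icc.2 hm.1) m (right_mem_Icc.2 hm.1) hm.1
  nlinarith [mul_le_mul_of_nonneg_left (sub_le_sub_right hm.2 p) hM]

theorem pos_of_div_lt_mul {a K : ℝ} (hK : 1 < K) (h : a / K < a * K) : 0 < a := by
  have hK2 : 1 < K * K := by nlinarith
  rw [div_lt_iff₀ (by linarith)] at h
  nlinarith

theorem one_lt_two_mul_mul_of_lt {h K f s : ℝ} (hh : 0 < h) (hK : 0 < K)
    (hf : h / K < f) (hs : K / (2 * h) < s) : 1 < 2 * f * s := by
  have hunit : 2 * (h / K) * (K / (2 * h)) = 1 := by field_simp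
  nlinarith [mul_lt_mul'' hf hs (by positivity) (by positivity)]

theorem neg_two_mul_le_mul_div_sqrt {r u E y : ℝ} (hr2 : r < 2)
    (hu : -E ≤ u) (hu0 : u ≤ 0) : -(2 * E) ≤ r * u / Real.sqrt (1 + y ^ 2) := by
  have hs : 1 ≤ Real.sqrt (1 + y ^ 2) := Real.one_le_sqrt.2 (by nlinarith [sq_nonneg y])
  rw [le_div_iff₀ (by linarith)]
  nlinarith

theorem one_add_mul_mul_one_add_mul_sub_one_le {ε c c₁ l : ℝ} (hε : 0 ≤ ε) (hc₁ : 0 ≤ c₁)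
    (hc₁l : c₁ ≤ l) (hlc : l ≤ c) :
    (1 + c₁ * ε) * (1 + l * ε) - 1 ≤ ε * (2 * c + c ^ 2 * ε) := by
  have hc₁l' : c₁ * l ≤ c ^ 2 := by nlinarith
  nlinarith [mul_le_mul_of_nonneg_right hc₁l' (mul_nonneg hε hε)]

theorem solution_stays_beyond_caustic_general (ε c c₀ c₁ l : ℝ) (hε : 0 < ε)
    (hc₁ : 0 < c₁) (hc₁c₀ : c₁ < c₀)
    (φ' φ'' a b t : ℝ → ℝ)
    (hi : ∀ x ∈ Set.Icc (-ε) ε,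
      φ'' 0 / (1 + c₁ * ε) < φ'' x ∧ φ'' x < φ'' 0 * (1 + c₁ * ε))
    (hii : ∀ x ∈ Set.Icc (-ε) ε,
      0 < (1 + a x) / (1 + b x) ∧ (1 + a x) / (1 + b x) < 2)
    (hiv : 8 * ε * φ'' 0 * (2 * c + c ^ 2 * ε) < c₀ - c₁)
    (hl : l ∈ Set.Icc c₀ c)
    (hode : ∀ x ∈ Set.Icc (-ε) ε,
      HasDerivAt t
        (((1 + a x) / (1 + b x)) * (1 - 2 * φ'' x * t x) / Real.sqrt (1 + (φ' x) ^ 2)) x)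
    (hinit : t (-ε) = (1 + l * ε) / (2 * φ'' 0)) :
    ∀ x ∈ Set.Icc (-ε) ε, 1 - 2 * φ'' x * t x < 0 := by
  have hK : 0 < 1 + c₁ * ε := by positivity
  have h0 : 0 < φ'' 0 := by
    obtain ⟨hlow, hupp⟩ := hi 0 ⟨by linarith, hε.le⟩
    exact pos_of_div_lt_mul (by nlinarith) (hlow.trans hupp)
  set B := (1 + c₁ * ε) / (2 * φ'' 0)
  set E := ε * (2 * c + c ^ 2 * ε)
  have hc₁l : c₁ ≤ l := (hc₁c₀.trans_le hl.1).le
  have hE : 0 ≤ E := by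
    have : 0 ≤ c := hc₁.le.trans (hc₁l.trans hl.2)
    positivity
  have hcaustic : ∀ x ∈ Icc (-ε) ε, B < t x → 1 - 2 * φ'' x * t x < 0 := fun x hx htx =>
    sub_neg.2 (one_lt_two_mul_mul_of_lt h0 hK (hi x hx).1 htx)
  have hinit' : 2 * φ'' 0 * t (-ε) = 1 + l * ε := by rw [hinit]; field_simp
  have hspeed : ∀ x ∈ Icc (-ε) ε, B < t x → t x ≤ t (-ε) → -E ≤ 1 - 2 * φ'' x * t x := by
    intro x hx htx htp
    have htpos : 0 < t x := lt_trans (by positivity) htx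
    have hprod : 2 * φ'' x * t x ≤ (1 + c₁ * ε) * (1 + l * ε) := by
      nlinarith [mul_le_mul (hi x hx).2.le htp htpos.le (by positivity)]
    linarith [one_add_mul_mul_one_add_mul_sub_one_le hε.le hc₁.le hc₁l hl.2]
  have hgap : B + 2 * E * (ε - -ε) < t (-ε) := by
    rw [hinit, div_add' _ _ _ (by positivity), div_lt_div_iff_of_pos_right (by positivity)]
    nlinarith [mul_lt_mul_of_pos_left hiv hε, mul_le_mul_of_nonneg_left hl.1 hε.le]
  have habove : ∀ x ∈ Icc (-ε) ε, B < t x :=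
    lt_on_Icc_of_hasDerivAt hode
      (fun x hx htx => div_nonpos_of_nonpos_of_nonneg
        (mul_nonpos_of_nonneg_of_nonpos (hii x hx).1.le (hcaustic x hx htx).le) (Real.sqrt_nonneg _))
      (fun x hx htx htp => neg_two_mul_le_mul_div_sqrt (hii x hx).2 (hspeed x hx htx htp)
        (hcaustic x hx htx).le)
      (by positivity) hgap
  exact fun x hx => hcaustic x hx (habove x hx)

/-- Under the quantitative hypotheses (i)–(iv), the solution of the ODE with initial value
`t(−ε) = (1 + lε)/(2φ''(0))`, `l ∈ [c₀, c]`, stays strictly beyond the caustic: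
`1 − 2φ''(x)t(x) < 0` on `[−ε, ε]`. -/
theorem solution_stays_beyond_caustic (x₀ ε c c₀ c₁ l : ℝ) (hx₀ : 0 < x₀) (hε : 0 < ε)
    (hεx₀ : ε ≤ x₀) (hc₁ : 0 < c₁) (hc₁c₀ : c₁ < c₀) (hc₀c : c₀ < c)
    (φ φ' φ'' φ''' a b t : ℝ → ℝ)
    (hφ : ∀ x ∈ Set.Icc (-x₀) x₀, HasDerivAt φ (φ' x) x)
    (hφ' : ∀ x ∈ Set.Icc (-x₀) x₀, HasDerivAt φ' (φ'' x) x)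
    (hφ'' : ∀ x ∈ Set.Icc (-x₀) x₀, HasDerivAt φ'' (φ''' x) x)
    (hφ'''c : ContinuousOn φ''' (Set.Icc (-x₀) x₀))
    (hconv : ∀ x ∈ Set.Icc (-x₀) x₀, 0 < φ'' x)
    (hab : ∀ x ∈ Set.Icc (-x₀) x₀,
      tau2 φ' 0 = a x • tau1 φ' x + (1 + b x) • tau2 φ' x)
    (hi : ∀ x ∈ Set.Icc (-ε) ε,
      φ'' 0 / (1 + c₁ * ε) < φ'' x ∧ φ'' x < φ'' 0 * (1 + c₁ * ε))
    (hii : ∀ x ∈ Set.Icc (-ε) ε,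
      0 < (1 + a x) / (1 + b x) ∧ (1 + a x) / (1 + b x) < 2)
    (hiii : ∀ x ∈ Set.Icc (-ε) ε,
      Real.sqrt (1 + (φ' x) ^ 2) < 2 * Real.sqrt (1 + (φ' 0) ^ 2))
    (hiv : 8 * ε * φ'' 0 * (2 * c + c ^ 2 * ε) < c₀ - c₁)
    (hl : l ∈ Set.Icc c₀ c)
    (hode : ∀ x ∈ Set.Icc (-ε) ε,
      HasDerivAt t
        (((1 + a x) / (1 + b x)) * (1 - 2 * φ'' x * t x) / Real.sqrt (1 + (φ' x) ^ 2)) x)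
    (hinit : t (-ε) = (1 + l * ε) / (2 * φ'' 0)) :
    ∀ x ∈ Set.Icc (-ε) ε, 1 - 2 * φ'' x * t x < 0 :=
  solution_stays_beyond_caustic_general ε c c₀ c₁ l hε hc₁ hc₁c₀ φ' φ'' a b t hi hii hiv hl hode
    hinit
end

section
/- Let r > 0 and φ(x) = −√(r² − x²) for x ∈ (−r, r) (the lower semicircle of the circle x² + y² = r²). For x ∈ (−r, r), let P = (x, φ(x)), let τ₁(x) = (−2φ'(x), 1 − φ'(x)²)/(1 + φ'(x)²) be the direction of the ray obtained by reflecting a downward vertical ray at P, and let L_x(1) = P + (1/(2φ''(x)))·(−2φ'(x), 1 − φ'(x)²) be the caustic tangency point. Then: (i) the second endpoint of the chord of the circle through P in direction τ₁(x) is Q = P − 2⟨P, τ₁(x)⟩·τ₁(x), and ‖Q − P‖ = 2√(r² − x²); (ii) ‖L_x(1) − P‖ = √(r² − x²)/2. Hence the tangency point divides the chord of the reflected ray in the ratio 1 : 3 measured from the point of reflection. -/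
/-!
The reflected direction `τ₁(x)` is a unit vector, so `Q = P − 2⟨P, τ₁⟩τ₁` is the mirror image
of `P` in the line through the centre orthogonal to `τ₁`: it lies on the circle, and the chord
has length `2|⟨P, τ₁⟩|`. On the lower semicircle `P = (x, −s)` with `s = √(r² − x²)`,
`φ' = x/s` and `φ'' = r²/s³`, which gives `⟨P, τ₁⟩ = −s`, and the caustic offset has length
`(1 + φ'²)/(2φ'') = (r²/s²)·(s³/(2r²)) = s/2`, a quarter of the chord `2s`.
-/

open Topology

/-- The standard inner product on `ℝ × ℝ`. -/
def dot2 (u v : ℝ × ℝ) : ℝ := u.1 * v.1 + u.2 * v.2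

/-- The Euclidean norm on `ℝ × ℝ`. -/
noncomputable def euclNorm (u : ℝ × ℝ) : ℝ := Real.sqrt (u.1 ^ 2 + u.2 ^ 2)

section Plane

lemma euclNorm_eq_sqrt_dot2 (u : ℝ × ℝ) : euclNorm u = √(dot2 u u) := by
  simp only [euclNorm, dot2, sq]

lemma euclNorm_smul (c : ℝ) (u : ℝ × ℝ) : euclNorm (c • u) = |c| * euclNorm u := by
  simp only [euclNorm, Prod.smul_fst, Prod.smul_snd, smul_eq_mul]
  rw [← Real.sqrt_sq_eq_abs, ← Real.sqrt_mul (sq_nonneg c)]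
  ring_nf

lemma euclNorm_reflectionDirection (p : ℝ) : euclNorm (-2 * p, 1 - p ^ 2) = 1 + p ^ 2 := by
  rw [euclNorm, show (-2 * p) ^ 2 + (1 - p ^ 2) ^ 2 = (1 + p ^ 2) ^ 2 by ring]
  exact Real.sqrt_sq (by positivity)

lemma dot2_tau1_self (φ' : ℝ → ℝ) (x : ℝ) : dot2 (tau1 φ' x) (tau1 φ' x) = 1 := by
  have h : 0 < 1 + φ' x ^ 2 := by positivity
  simp only [dot2, tau1, Prod.smul_fst, Prod.smul_snd, smul_eq_mul]
  field_simp
  ring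

variable {P τ : ℝ × ℝ}

lemma dot2_self_sub_two_dot2_smul (hτ : dot2 τ τ = 1) :
    dot2 (P - (2 * dot2 P τ) • τ) (P - (2 * dot2 P τ) • τ) = dot2 P P := by
  simp only [dot2, Prod.fst_sub, Prod.snd_sub, Prod.smul_fst, Prod.smul_snd, smul_eq_mul] at hτ ⊢
  linear_combination 4 * (P.1 * τ.1 + P.2 * τ.2) ^ 2 * hτ

lemma euclNorm_sub_two_dot2_smul_sub (hτ : dot2 τ τ = 1) :
    euclNorm (P - (2 * dot2 P τ) • τ - P) = 2 * |dot2 P τ| := by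
  rw [sub_sub_cancel_left, ← neg_smul, euclNorm_smul, euclNorm_eq_sqrt_dot2 τ, hτ,
    Real.sqrt_one, mul_one, abs_neg, abs_mul, abs_two]

end Plane

section Semicircle

noncomputable def lowerSemicircle (r y : ℝ) : ℝ := -√(r ^ 2 - y ^ 2)

variable {r x : ℝ}

lemma dot2_self_lowerSemicircle (hx : x ^ 2 ≤ r ^ 2) :
    dot2 (x, lowerSemicircle r x) (x, lowerSemicircle r x) = r ^ 2 := by
  simp only [dot2, lowerSemicircle, neg_mul_neg, Real.mul_self_sqrt (sub_nonneg.2 hx)]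
  ring

lemma hasDerivAt_sqrt_sq_sub (hx : x ^ 2 < r ^ 2) :
    HasDerivAt (fun y => √(r ^ 2 - y ^ 2)) (-x / √(r ^ 2 - x ^ 2)) x := by
  have hs : √(r ^ 2 - x ^ 2) ≠ 0 := (Real.sqrt_pos.2 (sub_pos.2 hx)).ne'
  refine (((hasDerivAt_pow 2 x).const_sub (r ^ 2)).sqrt (sub_pos.2 hx).ne').congr_deriv ?_
  field_simp
  ring

lemma hasDerivAt_lowerSemicircle (hx : x ^ 2 < r ^ 2) :
    HasDerivAt (lowerSemicircle r) (x / √(r ^ 2 - x ^ 2)) x :=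
  (hasDerivAt_sqrt_sq_sub hx).neg.congr_deriv (by rw [neg_div, neg_neg])

lemma deriv_lowerSemicircle (hx : x ^ 2 < r ^ 2) :
    deriv (lowerSemicircle r) x = x / √(r ^ 2 - x ^ 2) :=
  (hasDerivAt_lowerSemicircle hx).deriv

lemma deriv_lowerSemicircle_eventuallyEq (hx : x ^ 2 < r ^ 2) :
    deriv (lowerSemicircle r) =ᶠ[𝓝 x] fun y => y / √(r ^ 2 - y ^ 2) := by
  have hopen : IsOpen {y : ℝ | y ^ 2 < r ^ 2} := isOpen_lt (by fun_prop) continuous_const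
  filter_upwards [hopen.mem_nhds hx] with y hy
  exact deriv_lowerSemicircle hy

lemma hasDerivAt_slope_lowerSemicircle (hx : x ^ 2 < r ^ 2) :
    HasDerivAt (fun y => y / √(r ^ 2 - y ^ 2)) (r ^ 2 / √(r ^ 2 - x ^ 2) ^ 3) x := by
  have hs : √(r ^ 2 - x ^ 2) ≠ 0 := (Real.sqrt_pos.2 (sub_pos.2 hx)).ne'
  refine ((hasDerivAt_id x).div (hasDerivAt_sqrt_sq_sub hx) hs).congr_deriv ?_
  field_simp
  rw [id_eq, Real.sq_sqrt (sub_pos.2 hx).le]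
  ring

lemma deriv_deriv_lowerSemicircle (hx : x ^ 2 < r ^ 2) :
    deriv (deriv (lowerSemicircle r)) x = r ^ 2 / √(r ^ 2 - x ^ 2) ^ 3 := by
  rw [(deriv_lowerSemicircle_eventuallyEq hx).deriv_eq]
  exact (hasDerivAt_slope_lowerSemicircle hx).deriv

lemma dot2_lowerSemicircle_tau1 (hx : x ^ 2 < r ^ 2) :
    dot2 (x, lowerSemicircle r x) (tau1 (deriv (lowerSemicircle r)) x) = -√(r ^ 2 - x ^ 2) := by
  have hs : √(r ^ 2 - x ^ 2) ≠ 0 := (Real.sqrt_pos.2 (sub_pos.2 hx)).ne'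
  simp only [dot2, tau1, lowerSemicircle, deriv_lowerSemicircle hx, Prod.smul_fst,
    Prod.smul_snd, smul_eq_mul]
  field_simp
  ring

lemma euclNorm_causticOffset_lowerSemicircle (hx : x ^ 2 < r ^ 2) :
    euclNorm ((1 / (2 * deriv (deriv (lowerSemicircle r)) x))
        • (-2 * deriv (lowerSemicircle r) x, 1 - (deriv (lowerSemicircle r) x) ^ 2))
      = √(r ^ 2 - x ^ 2) / 2 := by
  have hs : 0 < √(r ^ 2 - x ^ 2) := Real.sqrt_pos.2 (sub_pos.2 hx)
  have hs2 : √(r ^ 2 - x ^ 2) ^ 2 = r ^ 2 - x ^ 2 := Real.sq_sqrt (sub_pos.2 hx).le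
  have hr : r ≠ 0 := by rintro rfl; nlinarith
  rw [euclNorm_smul, euclNorm_reflectionDirection, deriv_deriv_lowerSemicircle hx,
    deriv_lowerSemicircle hx, abs_of_pos (by positivity)]
  field_simp
  linear_combination hs2

end Semicircle

theorem chord_divided_one_to_three_general (r x : ℝ) (hx : x ∈ Set.Ioo (-r) r)
    (φ : ℝ → ℝ) (hφ : ∀ y, φ y = -Real.sqrt (r ^ 2 - y ^ 2))
    (P Q : ℝ × ℝ) (hP : P = (x, φ x))
    (hQ : Q = P - (2 * dot2 P (tau1 (deriv φ) x)) • tau1 (deriv φ) x) :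
    dot2 Q Q = r ^ 2 ∧
    euclNorm (Q - P) = 2 * Real.sqrt (r ^ 2 - x ^ 2) ∧
    euclNorm ((1 / (2 * deriv (deriv φ) x))
        • (-2 * deriv φ x, 1 - (deriv φ x) ^ 2)) = Real.sqrt (r ^ 2 - x ^ 2) / 2 := by
  have hxr : x ^ 2 < r ^ 2 := sq_lt_sq' hx.1 hx.2
  obtain rfl : φ = lowerSemicircle r := funext hφ
  have hτ := dot2_tau1_self (deriv (lowerSemicircle r)) x
  subst hQ hP
  refine ⟨?_, ?_, euclNorm_causticOffset_lowerSemicircle hxr⟩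
  · rw [dot2_self_sub_two_dot2_smul hτ, dot2_self_lowerSemicircle hxr.le]
  · rw [euclNorm_sub_two_dot2_smul_sub hτ, dot2_lowerSemicircle_tau1 hxr, abs_neg,
      abs_of_nonneg (Real.sqrt_nonneg _)]

/-- For the lower semicircle `φ(x) = −√(r² − x²)`: the second endpoint of the chord through
`P = (x, φ(x))` in the reflected direction `τ₁(x)` is `Q = P − 2⟨P, τ₁(x)⟩·τ₁(x)` (a point
of the circle), the chord has length `2√(r² − x²)`, and the caustic tangency point `L_x(1)`
is at distance `√(r² − x²)/2` from `P`, i.e. the tangency point divides the chord in the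
ratio `1 : 3` from the point of reflection. -/
theorem chord_divided_one_to_three (r x : ℝ) (hr : 0 < r) (hx : x ∈ Set.Ioo (-r) r)
    (φ : ℝ → ℝ) (hφ : ∀ y, φ y = -Real.sqrt (r ^ 2 - y ^ 2))
    (P Q : ℝ × ℝ) (hP : P = (x, φ x))
    (hQ : Q = P - (2 * dot2 P (tau1 (deriv φ) x)) • tau1 (deriv φ) x) :
    dot2 Q Q = r ^ 2 ∧
    euclNorm (Q - P) = 2 * Real.sqrt (r ^ 2 - x ^ 2) ∧
    euclNorm ((1 / (2 * deriv (deriv φ) x))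
        • (-2 * deriv φ x, 1 - (deriv φ x) ^ 2)) = Real.sqrt (r ^ 2 - x ^ 2) / 2 :=
  chord_divided_one_to_three_general r x hx φ hφ P Q hP hQ
end
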